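/- With c = √(2·log(2/δ₁)) in the setting of the previous concentration bound, with probability at least 1 − δ₁ the random count N_s satisfies √((T_s/2)·log(2/δ₁)) ≤ N_s ≤ 3·√((T_s/2)·log(2/δ₁)). -/

import Mathlib

/-!
Each `b i` takes values in `[0, 1]`, so by Hoeffding's lemma the centred sum `S - 𝔼 S` is
sub-Gaussian with variance proxy `Ts / 4`, and the two-sided Chernoff bound gives
`P(|S - 𝔼 S| ≥ ε) ≤ 2 exp (-2 ε² / Ts)`. With `L = √((Ts/2) log(2/δ₁))` the mean is
`𝔼 S = Ts · c / √Ts = 2L` and `2 exp (-2 L² / Ts) = δ₁`, so `L ≤ S ≤ 3L` fails with probability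
at most `δ₁`.
-/

open MeasureTheory ProbabilityTheory Real NNReal

namespace ProbabilityTheory.HasSubgaussianMGF

variable {Ω : Type*} [MeasurableSpace Ω] {μ : Measure Ω} {X : Ω → ℝ} {c : ℝ≥0}

lemma measureReal_abs_ge_le (h : HasSubgaussianMGF X c μ) {ε : ℝ} (hε : 0 ≤ ε) :
    μ.real {ω | ε ≤ |X ω|} ≤ 2 * exp (-ε ^ 2 / (2 * c)) := by
  have hsplit : {ω | ε ≤ |X ω|} = {ω | ε ≤ X ω} ∪ {ω | ε ≤ (-X) ω} := by
    ext ω; simp [le_abs]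
  calc μ.real {ω | ε ≤ |X ω|}
      ≤ μ.real {ω | ε ≤ X ω} + μ.real {ω | ε ≤ (-X) ω} := hsplit ▸ measureReal_union_le _ _
    _ ≤ 2 * exp (-ε ^ 2 / (2 * c)) := by
      linarith [h.measure_ge_le hε, h.neg.measure_ge_le hε]

end ProbabilityTheory.HasSubgaussianMGF

section Hoeffding

variable {Ω ι : Type*} [MeasurableSpace Ω] {μ : Measure Ω} [IsProbabilityMeasure μ] [Fintype ι]
  {X : ι → Ω → ℝ} {a b : ℝ}

lemma hasSubgaussianMGF_sum_sub_integral_of_mem_Icc (hX : ∀ i, Measurable (X i))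
    (hindep : iIndepFun X μ) (hab : ∀ i ω, X i ω ∈ Set.Icc a b) :
    HasSubgaussianMGF (fun ω ↦ ∑ i, X i ω - ∑ i, μ[X i])
      (Fintype.card ι * (‖b - a‖₊ / 2) ^ 2) μ := by
  have hcentered : iIndepFun (fun i ↦ (· - μ[X i]) ∘ X i) μ :=
    hindep.comp (fun i y ↦ y - μ[X i]) fun _ ↦ measurable_id.sub_const _
  have hsum := HasSubgaussianMGF.sum_of_iIndepFun hcentered (s := Finset.univ)
    (fun i _ ↦ hasSubgaussianMGF_of_mem_Icc (hX i).aemeasurable (ae_of_all _ (hab i)))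
  simpa [Finset.sum_sub_distrib] using hsum

theorem measureReal_abs_sum_sub_integral_ge_le (hX : ∀ i, Measurable (X i))
    (hindep : iIndepFun X μ) (hab : ∀ i ω, X i ω ∈ Set.Icc a b) {ε : ℝ} (hε : 0 ≤ ε) :
    μ.real {ω | ε ≤ |∑ i, X i ω - ∑ i, μ[X i]|} ≤
      2 * exp (-2 * ε ^ 2 / (Fintype.card ι * (b - a) ^ 2)) := by
  have hc : (2 * ((Fintype.card ι * (‖b - a‖₊ / 2) ^ 2 : ℝ≥0) : ℝ)) =
      Fintype.card ι * (b - a) ^ 2 / 2 := by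
    push_cast
    rw [Real.norm_eq_abs, div_pow, sq_abs]
    ring
  calc _ ≤ _ :=
        (hasSubgaussianMGF_sum_sub_integral_of_mem_Icc hX hindep hab).measureReal_abs_ge_le hε
    _ = _ := by rw [hc, div_div_eq_mul_div]; ring_nf

end Hoeffding

lemma integral_eq_measureReal_of_eq_zero_or_one {Ω : Type*} [MeasurableSpace Ω] {μ : Measure Ω}
    {f : Ω → ℝ} (hf : Measurable f) (h01 : ∀ ω, f ω = 0 ∨ f ω = 1) :
    μ[f] = μ.real {ω | f ω = 1} := by
  have hf_eq : f = {ω | f ω = 1}.indicator 1 := by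
    ext ω; rcases h01 ω with h | h <;> simp [Set.indicator, h]
  nth_rewrite 1 [hf_eq]
  exact integral_indicator_one (hf (measurableSet_singleton 1))

lemma ofReal_one_sub_le_of_measureReal_compl_le {Ω : Type*} [MeasurableSpace Ω] {μ : Measure Ω}
    [IsProbabilityMeasure μ] {s : Set Ω} {δ : ℝ} (h : μ.real sᶜ ≤ δ) :
    ENNReal.ofReal (1 - δ) ≤ μ s := by
  rw [ENNReal.ofReal_le_iff_le_toReal (measure_ne_top μ s), ← measureReal_def]
  have hunion := measureReal_union_le (μ := μ) s sᶜ
  rw [Set.union_compl_self, probReal_univ] at hunion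
  linarith

theorem bernoulli_sum_two_sided_general
    {Ω : Type*} [MeasurableSpace Ω] (μ : Measure Ω) [IsProbabilityMeasure μ]
    (Ts : ℕ) (hTs : 0 < Ts) (δ₁ : ℝ) (hδ₁ : 0 < δ₁) (hδ₁' : δ₁ < 2 * Real.exp (-1))
    (c : ℝ) (hc : c = Real.sqrt (2 * Real.log (2 / δ₁)))
    (b : Fin Ts → Ω → ℝ)
    (hmeas : ∀ i, Measurable (b i))
    (hindep : ProbabilityTheory.iIndepFun b μ)
    (h01 : ∀ i ω, b i ω = 0 ∨ b i ω = 1)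
    (hp : ∀ i, μ {ω | b i ω = 1} = ENNReal.ofReal (c / Real.sqrt Ts)) :
    ENNReal.ofReal (1 - δ₁) ≤
      μ {ω | Real.sqrt ((Ts : ℝ) / 2 * Real.log (2 / δ₁)) ≤ ∑ i, b i ω ∧
             ∑ i, b i ω ≤ 3 * Real.sqrt ((Ts : ℝ) / 2 * Real.log (2 / δ₁))} := by
  have hTs' : (0 : ℝ) < Ts := Nat.cast_pos.2 hTs
  have hlog : 0 < log (2 / δ₁) := by
    refine log_pos ((one_lt_div hδ₁).2 (hδ₁'.trans_le ?_))
    linarith [exp_le_one_iff.2 (show (-1 : ℝ) ≤ 0 by norm_num)]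
  set L := sqrt ((Ts : ℝ) / 2 * log (2 / δ₁))
  have hL2 : L ^ 2 = Ts / 2 * log (2 / δ₁) := sq_sqrt (by positivity)
  have hmean : ∑ i, μ[b i] = 2 * L := by
    have hc0 : 0 ≤ c := hc ▸ sqrt_nonneg _
    simp_rw [integral_eq_measureReal_of_eq_zero_or_one (hmeas _) (h01 _), measureReal_def, hp]
    rw [ENNReal.toReal_ofReal (by positivity), Finset.sum_const, Finset.card_univ,
      Fintype.card_fin, nsmul_eq_mul]
    refine (pow_left_inj₀ (by positivity) (by positivity) two_ne_zero).1 ?_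
    rw [mul_pow, mul_pow, div_pow, hL2, sq_sqrt hTs'.le, hc, sq_sqrt (by positivity)]
    field_simp
  have htail : μ.real {ω | L ≤ |∑ i, b i ω - 2 * L|} ≤ δ₁ := by
    have hIcc : ∀ i ω, b i ω ∈ Set.Icc (0 : ℝ) 1 := fun i ω ↦ by
      rcases h01 i ω with h | h <;> simp [h]
    have hhoeffding :=
      measureReal_abs_sum_sub_integral_ge_le hmeas hindep hIcc (sqrt_nonneg _ : 0 ≤ L)
    rw [hmean] at hhoeffding
    convert hhoeffding using 1
    have hexponent : -2 * (Ts / 2 * log (2 / δ₁)) / (Ts * (1 - 0) ^ 2) = -log (2 / δ₁) := by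
      field_simp; norm_num
    rw [hL2, Fintype.card_fin, hexponent, exp_neg, exp_log (by positivity)]
    field_simp
  refine ofReal_one_sub_le_of_measureReal_compl_le ((measureReal_mono ?_).trans htail)
  intro ω hω
  simp only [Set.mem_compl_iff, Set.mem_ofPred_eq, not_and_or, not_le] at hω ⊢
  rw [le_abs]
  rcases hω with h | h
  · right; linarith
  · left; linarith

theorem bernoulli_sum_two_sided
    {Ω : Type*} [MeasurableSpace Ω] (μ : Measure Ω) [IsProbabilityMeasure μ]
    (Ts : ℕ) (hTs : 0 < Ts) (δ₁ : ℝ) (hδ₁ : 0 < δ₁) (hδ₁' : δ₁ < 2 * Real.exp (-1))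
    (c : ℝ) (hc : c = Real.sqrt (2 * Real.log (2 / δ₁)))
    (hc1 : c / Real.sqrt Ts ≤ 1)
    (b : Fin Ts → Ω → ℝ)
    (hmeas : ∀ i, Measurable (b i))
    (hindep : ProbabilityTheory.iIndepFun b μ)
    (h01 : ∀ i ω, b i ω = 0 ∨ b i ω = 1)
    (hp : ∀ i, μ {ω | b i ω = 1} = ENNReal.ofReal (c / Real.sqrt Ts)) :
    ENNReal.ofReal (1 - δ₁) ≤
      μ {ω | Real.sqrt ((Ts : ℝ) / 2 * Real.log (2 / δ₁)) ≤ ∑ i, b i ω ∧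
             ∑ i, b i ω ≤ 3 * Real.sqrt ((Ts : ℝ) / 2 * Real.log (2 / δ₁))} :=
  bernoulli_sum_two_sided_general μ Ts hTs δ₁ hδ₁ hδ₁' c hc b hmeas hindep h01 hp
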